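/- arXiv:1110.1849 — 2 statements merged into one kernel-verified Lean document; each statement's English description precedes it below -/
import Mathlib

section
/- Let Q be a finite connected quandle with its elements {1,2,…,n} naturally ordered and with profile {1, ℓ_1, ℓ_2, …, ℓ_k} where 1 ≤ ℓ_1 ≤ ⋯ ≤ ℓ_{k-1} < ℓ_k. Then for any reordering μ which is natural with respect to r_q for some q ∈ Q, there is a natural reordering ν with respect to r_n such that the quandle matrices after reordering by μ and by ν coincide and ν(i) = i for every integer i with (ℓ_1+⋯+ℓ_{k-1})+1 ≤ i ≤ n. -/
/-- A quandle structure on a set `Q`: a binary operation `op` that is idempotent,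
right-invertible (each right translation `r_b : x ↦ x * b` is a bijection) and
right-distributive. -/
structure QuandleOp (Q : Type*) where
  op : Q → Q → Q
  op_self : ∀ a, op a a = a
  op_bijective : ∀ b, Function.Bijective fun a => op a b
  op_distrib : ∀ a b c, op (op a b) c = op (op a c) (op b c)

namespace QuandleOp

/-- The right translation `r_b : x ↦ x * b`, as a permutation of `Q`. -/
noncomputable def r {Q : Type*} (S : QuandleOp Q) (b : Q) : Equiv.Perm Q :=
  Equiv.ofBijective _ (S.op_bijective b)

/-- A quandle is connected if every element can be taken to every other element by a
finite composition of the maps `r_b` and their inverses, i.e. by an element of the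
subgroup of permutations generated by the `r_b`. -/
def Connected {Q : Type*} (S : QuandleOp Q) : Prop :=
  ∀ a b : Q, ∃ g ∈ Subgroup.closure (Set.range S.r), g a = b

end QuandleOp

/-- The element `n` of the quandle `{1, …, n}` modelled as `Fin n` (element `m`
corresponds to the index `m - 1`). -/
def theTop (n : ℕ) [NeZero n] : Fin n :=
  ⟨n - 1, Nat.sub_lt (Nat.pos_of_ne_zero (NeZero.ne n)) Nat.one_pos⟩

/-- `ν` is a natural reordering with respect to `r q`, realized by the presentation of
`r q` as the product of the disjoint cycles `(I s 0  I s 1 … I s (ℓ s - 1))` for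
`s = 0, …, k-1` together with the fixed point `(q)`, where `1 ≤ ℓ 0 ≤ ⋯ ≤ ℓ (k-1)`:
it sends `q` to the top element `n` (index `n - 1`) and sends the `t`-th entry of the
`s`-th cycle to the element with index `(ℓ 0 + ⋯ + ℓ (s-1)) + t`. -/
def IsNaturalReorderingWith {n : ℕ} (S : QuandleOp (Fin n)) (q : Fin n)
    (ν : Equiv.Perm (Fin n)) {k : ℕ} (ℓ : Fin k → ℕ)
    (I : (s : Fin k) → Fin (ℓ s) → Fin n) : Prop :=
  (ν q).val = n - 1 ∧
  (∀ s, 1 ≤ ℓ s) ∧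
  Monotone ℓ ∧
  (∑ s, ℓ s) = n - 1 ∧
  Function.Injective (fun p : (s : Fin k) × Fin (ℓ s) => I p.1 p.2) ∧
  (∀ (s : Fin k) (t : Fin (ℓ s)), I s t ≠ q) ∧
  (∀ (s : Fin k) (t : Fin (ℓ s)),
    S.op (I s t) q = I s ⟨(t.val + 1) % ℓ s, Nat.mod_lt _ (Nat.zero_lt_of_lt t.isLt)⟩) ∧
  (∀ (s : Fin k) (t : Fin (ℓ s)),
    (ν (I s t)).val = (∑ j ∈ Finset.Iio s, ℓ j) + t.val)

/-- `ν` is a natural reordering with respect to `r q` (for some presentation of `r q`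
as a product of disjoint cycles of weakly increasing lengths, together with `(q)`). -/
def IsNaturalReordering {n : ℕ} (S : QuandleOp (Fin n)) (q : Fin n)
    (ν : Equiv.Perm (Fin n)) : Prop :=
  ∃ (k : ℕ) (ℓ : Fin k → ℕ) (I : (s : Fin k) → Fin (ℓ s) → Fin n),
    IsNaturalReorderingWith S q ν ℓ I

/-- The elements of the quandle are naturally ordered with cycle lengths `ℓ`:
`r n` is decomposed into disjoint cycles in form (N), i.e. the identity reordering is a
natural reordering with respect to `r n` with cycle lengths `ℓ`.  (This also says that
the profile of the quandle is `{1, ℓ 0, …, ℓ (k-1)}`.) -/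
def NaturallyOrderedWith {n : ℕ} [NeZero n] (S : QuandleOp (Fin n)) {k : ℕ}
    (ℓ : Fin k → ℕ) : Prop :=
  ∃ I, IsNaturalReorderingWith S (theTop n) (Equiv.refl (Fin n)) ℓ I

/-- The elements of the quandle are naturally ordered (the quandle matrix is in
canonical form). -/
def NaturallyOrdered {n : ℕ} [NeZero n] (S : QuandleOp (Fin n)) : Prop :=
  ∃ (k : ℕ) (ℓ : Fin k → ℕ), NaturallyOrderedWith S ℓ

/-- The quandle operation (equivalently, the quandle matrix) obtained after reordering
the elements by the bijection `ν`: the new matrix has entry `ν (i * j)` in row `ν i`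
and column `ν j`. -/
def reorderedOp {n : ℕ} (S : QuandleOp (Fin n)) (ν : Equiv.Perm (Fin n)) :
    Fin n → Fin n → Fin n :=
  fun i j => ν (S.op (ν.symm i) (ν.symm j))

/-! Connectedness gives an automorphism `g`, a word in the `r_b^{±1}`, with `g q = n`. It carries
the cycle presentation of `r_q` behind `μ` to a presentation of `r_n` with the same lengths,
turns `μ` into the natural reordering `μ ∘ g⁻¹` with respect to `r_n`, and leaves the reordered
matrix unchanged. Cycle lengths are minimal periods, so every presentation of `r_n` has the same
longest cycle length `ℓ_k`; as `ℓ_k` is strictly larger than the other lengths, the longest cycle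
is the same set in both presentations, namely the last cycle of form (N). Composing `g` with a
suitable power of `r_n`, again an automorphism fixing `n`, rotates that cycle so that it starts at
`ℓ_1 + ⋯ + ℓ_{k-1} + 1`, and then the new reordering fixes the last cycle and `n` pointwise. -/

namespace QuandleOp

variable {Q : Type*} (S : QuandleOp Q)

def autGroup : Subgroup (Equiv.Perm Q) where
  carrier := {φ | ∀ a b, φ (S.op a b) = S.op (φ a) (φ b)}
  one_mem' _ _ := rfl
  mul_mem' {φ ψ} hφ hψ a b := by
    rw [Equiv.Perm.mul_apply, hψ a b, hφ]
    rfl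
  inv_mem' {φ} hφ a b := φ.injective (by rw [hφ]; simp)

theorem r_mem_autGroup (b : Q) : S.r b ∈ S.autGroup :=
  fun a c => S.op_distrib a c b

theorem closure_range_r_le_autGroup : Subgroup.closure (Set.range S.r) ≤ S.autGroup :=
  (Subgroup.closure_le _).2 (Set.range_subset_iff.2 S.r_mem_autGroup)

end QuandleOp

theorem reorderedOp_mul_inv {n : ℕ} {S : QuandleOp (Fin n)} (μ : Equiv.Perm (Fin n))
    {φ : Equiv.Perm (Fin n)} (hφ : φ ∈ S.autGroup) :
    reorderedOp S (μ * φ⁻¹) = reorderedOp S μ := by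
  funext i j
  simp only [reorderedOp, Equiv.Perm.mul_apply, mul_inv_rev, inv_inv, ← Equiv.Perm.inv_def]
  rw [← hφ]
  simp

theorem sum_Iio_add_of_isTop {ι M : Type*} [Fintype ι] [PartialOrder ι] [DecidableEq ι]
    [LocallyFiniteOrderBot ι] [AddCommMonoid M] (f : ι → M) {top : ι} (htop : IsTop top) :
    ∑ i ∈ Finset.Iio top, f i + f top = ∑ i, f i := by
  rw [add_comm, ← Finset.sum_insert Finset.notMem_Iio_self, Finset.Iio_insert,
    Finset.eq_univ_of_forall fun i => Finset.mem_Iic.2 (htop i)]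

namespace IsNaturalReorderingWith

variable {n : ℕ} {S : QuandleOp (Fin n)} {q : Fin n} {ν : Equiv.Perm (Fin n)} {k : ℕ}
  {ℓ : Fin k → ℕ} {I : (s : Fin k) → Fin (ℓ s) → Fin n} {top : Fin k}

theorem iterate_r_apply (h : IsNaturalReorderingWith S q ν ℓ I) (s : Fin k) (t : Fin (ℓ s))
    (m : ℕ) :
    (S.r q)^[m] (I s t) = I s ⟨(t + m) % ℓ s, Nat.mod_lt _ (Nat.zero_lt_of_lt t.isLt)⟩ := by
  obtain ⟨-, -, -, -, -, -, hop, -⟩ := h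
  induction m with
  | zero => simp [Nat.mod_eq_of_lt t.isLt]
  | succ m ih =>
    rw [Function.iterate_succ_apply', ih, QuandleOp.r, Equiv.ofBijective_apply, hop]
    simp only [Nat.mod_add_mod, Nat.add_assoc]

theorem iterate_r_apply_zero (h : IsNaturalReorderingWith S q ν ℓ I) (s : Fin k)
    (t : Fin (ℓ s)) : (S.r q)^[t] (I s ⟨0, t.pos⟩) = I s t := by
  rw [h.iterate_r_apply]
  simp [Nat.mod_eq_of_lt t.isLt]

theorem minimalPeriod_r_apply (h : IsNaturalReorderingWith S q ν ℓ I) (s : Fin k)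
    (t : Fin (ℓ s)) : Function.minimalPeriod (S.r q) (I s t) = ℓ s := by
  have hinj : Function.Injective (I s) := h.2.2.2.2.1.comp sigma_mk_injective
  have hperiodic : ∀ m, Function.IsPeriodicPt (S.r q) m (I s t) ↔ ℓ s ∣ m := fun m => by
    rw [Function.IsPeriodicPt, Function.IsFixedPt, h.iterate_r_apply, hinj.eq_iff, Fin.ext_iff,
      ← Nat.add_modEq_left_iff, Nat.ModEq, Nat.mod_eq_of_lt t.isLt]
  exact Nat.dvd_antisymm ((hperiodic _).2 dvd_rfl).minimalPeriod_dvd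
    ((hperiodic _).1 (Function.isPeriodicPt_minimalPeriod _ _))

theorem exists_apply_eq (h : IsNaturalReorderingWith S q ν ℓ I) {a : Fin n} (ha : a ≠ q) :
    ∃ s t, I s t = a := by
  obtain ⟨-, -, -, hsum, hinj, hne, -, -⟩ := h
  let F : ((s : Fin k) × Fin (ℓ s)) → {a // a ≠ q} := fun x => ⟨I x.1 x.2, hne x.1 x.2⟩
  have hF : Function.Bijective F := by
    refine (Fintype.bijective_iff_injective_and_card F).2
      ⟨fun x y hxy => hinj congr($hxy.1), ?_⟩
    simp [Fintype.card_subtype_compl, hsum]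
  obtain ⟨x, hx⟩ := hF.2 ⟨a, ha⟩
  exact ⟨x.1, x.2, congr($hx.1)⟩

theorem map_aut (h : IsNaturalReorderingWith S q ν ℓ I) {φ : Equiv.Perm (Fin n)}
    (hφ : φ ∈ S.autGroup) :
    IsNaturalReorderingWith S (φ q) (ν * φ⁻¹) ℓ (fun s t => φ (I s t)) := by
  obtain ⟨hq, hpos, hmono, hsum, hinj, hne, hop, hidx⟩ := h
  refine ⟨by simpa using hq, hpos, hmono, hsum, fun x y hxy => hinj (φ.injective hxy),
    fun s t => φ.injective.ne (hne s t), fun s t => ?_, fun s t => by simpa using hidx s t⟩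
  rw [← hφ, hop]

theorem pos_of_one_lt (h : IsNaturalReorderingWith S q ν ℓ I) (hn : 1 < n) : 0 < k := by
  obtain ⟨-, -, -, hsum, -⟩ := h
  by_contra! hk
  obtain rfl : k = 0 := Nat.le_zero.1 hk
  rw [Finset.univ_eq_empty, Finset.sum_empty] at hsum
  omega

theorem one_lt_of_pos (h : IsNaturalReorderingWith S q ν ℓ I) (hk : 0 < k) : 1 < n := by
  obtain ⟨-, hpos, -, hsum, -⟩ := h
  have hle : ℓ ⟨0, hk⟩ ≤ ∑ s, ℓ s :=
    Finset.single_le_sum (fun _ _ => Nat.zero_le _) (Finset.mem_univ _)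
  have := hpos ⟨0, hk⟩
  omega

theorem val_apply_of_isTop (h : IsNaturalReorderingWith S q ν ℓ I) (htop : IsTop top)
    (t : Fin (ℓ top)) : (ν (I top t)).val = n - 1 - ℓ top + t := by
  obtain ⟨-, -, -, hsum, -, -, -, hidx⟩ := h
  rw [hidx, ← hsum, ← sum_Iio_add_of_isTop ℓ htop, Nat.add_sub_cancel]

variable {ν' : Equiv.Perm (Fin n)} {k' : ℕ} {ℓ' : Fin k' → ℕ}
  {J : (s : Fin k') → Fin (ℓ' s) → Fin n} {top' : Fin k'}

theorem length_le_length_top (h : IsNaturalReorderingWith S q ν ℓ I)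
    (h' : IsNaturalReorderingWith S q ν' ℓ' J) (htop' : IsTop top') (s : Fin k) :
    ℓ s ≤ ℓ' top' := by
  have hne : I s ⟨0, h.2.1 s⟩ ≠ q := h.2.2.2.2.2.1 s _
  have hmono : Monotone ℓ' := h'.2.2.1
  obtain ⟨s', t', hJ⟩ := h'.exists_apply_eq hne
  rw [← h.minimalPeriod_r_apply s ⟨0, h.2.1 s⟩, ← hJ, h'.minimalPeriod_r_apply]
  exact hmono (htop' s')

theorem length_top_eq (h : IsNaturalReorderingWith S q ν ℓ I)
    (h' : IsNaturalReorderingWith S q ν' ℓ' J) (htop : IsTop top) (htop' : IsTop top') :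
    ℓ' top' = ℓ top :=
  le_antisymm (h'.length_le_length_top h htop top') (h.length_le_length_top h' htop' top)

theorem exists_aut_map_top_cycle (h : IsNaturalReorderingWith S q ν ℓ I) (htop : IsTop top)
    (hstrict : ∀ s < top, ℓ s < ℓ top) (h' : IsNaturalReorderingWith S q ν' ℓ' J)
    (htop' : IsTop top') :
    ∃ ψ ∈ S.autGroup, ψ q = q ∧
      ∀ (t : Fin (ℓ' top')) (u : Fin (ℓ top)), t.val = u.val → ψ (J top' t) = I top u := by
  have h0 : 0 < ℓ' top' := h'.2.1 top'
  have hne : J top' ⟨0, h0⟩ ≠ q := h'.2.2.2.2.2.1 top' _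
  obtain ⟨s, c, hc⟩ := h.exists_apply_eq hne
  -- cycle lengths are minimal periods of `r_q`, and only the top cycle of `I` has length `ℓ top`
  obtain rfl : s = top := by
    by_contra hs
    have := hstrict s (lt_of_le_of_ne (htop s) hs)
    rw [← h.minimalPeriod_r_apply s c, hc, h'.minimalPeriod_r_apply,
      h.length_top_eq h' htop htop'] at this
    exact lt_irrefl _ this
  have hrot : (S.r q)^[ℓ s - c] (I s c) = I s ⟨0, c.pos⟩ := by
    rw [h.iterate_r_apply]
    simp [Nat.add_sub_cancel' c.isLt.le]
  refine ⟨S.r q ^ (ℓ s - c), pow_mem (S.r_mem_autGroup q) _,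
    Equiv.Perm.pow_apply_eq_self_of_apply_eq_self (S.op_self q) _, fun t u htu => ?_⟩
  rw [← Equiv.Perm.iterate_eq_pow, ← h'.iterate_r_apply_zero, ← hc,
    ← Function.iterate_add_apply, add_comm, Function.iterate_add_apply, hrot, htu,
    h.iterate_r_apply_zero]

theorem apply_eq_self_of_top_cycle (h₀ : IsNaturalReorderingWith S q (Equiv.refl _) ℓ I)
    (htop : IsTop top) (h : IsNaturalReorderingWith S q ν ℓ' J) (htop' : IsTop top')
    (hcycle : ∀ (t : Fin (ℓ' top')) (u : Fin (ℓ top)), t.val = u.val → J top' t = I top u)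
    {a : Fin n} (ha : ∑ j ∈ Finset.Iio top, ℓ j ≤ a) : ν a = a := by
  have hlen := h₀.length_top_eq h htop htop'
  have hsum : ∑ j ∈ Finset.Iio top, ℓ j + ℓ top = n - 1 :=
    (sum_Iio_add_of_isTop ℓ htop).trans h₀.2.2.2.1
  rcases eq_or_ne a q with rfl | haq
  · exact Fin.ext (h.1.trans h₀.1.symm)
  have ha' : a.val ≠ n - 1 := fun h => haq (Fin.ext (h.trans h₀.1.symm))
  have := a.isLt
  set L := ∑ j ∈ Finset.Iio top, ℓ j
  have hlt : a - L < ℓ top := by omega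
  have hu : I top ⟨a - L, hlt⟩ = a := by
    have := h₀.val_apply_of_isTop htop ⟨a - L, hlt⟩
    exact Fin.ext (by simp only [Equiv.refl_apply] at this; omega)
  have := h.val_apply_of_isTop htop' ⟨a - L, hlen ▸ hlt⟩
  calc ν a = ν (J top' ⟨a - L, hlen ▸ hlt⟩) := by rw [hcycle _ ⟨a - L, hlt⟩ rfl, hu]
    _ = a := Fin.ext (by dsimp only at this; omega)

end IsNaturalReorderingWith

/-- last part of Theorem 2 of the paper: let the elements of a finite
connected quandle on `{1,…,n}` be naturally ordered, with profile
`{1, ℓ 0, …, ℓ (k-1)}` where `ℓ (k-2) < ℓ (k-1)` (i.e. `ℓ s < ℓ (k-1)` for all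
`s < k - 1`).  For any reordering `μ` natural with respect to some `r q`, there is a
reordering `ν` natural with respect to `r n` producing the same reordered quandle
matrix as `μ` and fixing every element with index at least `ℓ 0 + ⋯ + ℓ (k-2)`. -/
theorem exists_natural_reordering_same_matrix_fixing_last_cycle
    {n k : ℕ} [NeZero n] (hk : 0 < k) (S : QuandleOp (Fin n)) (hconn : S.Connected)
    (ℓ : Fin k → ℕ) (hord : NaturallyOrderedWith S ℓ)
    (hstrict : ∀ s : Fin k, s.val < k - 1 → ℓ s < ℓ ⟨k - 1, by omega⟩)
    (q : Fin n) (μ : Equiv.Perm (Fin n)) (hμ : IsNaturalReordering S q μ) :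
    ∃ ν : Equiv.Perm (Fin n),
      IsNaturalReordering S (theTop n) ν ∧
      (∀ i j, reorderedOp S μ i j = reorderedOp S ν i j) ∧
      (∀ a : Fin n, (∑ j ∈ Finset.Iio (⟨k - 1, by omega⟩ : Fin k), ℓ j) ≤ a.val →
        ν a = a) := by
  obtain ⟨I, h₀⟩ := hord
  obtain ⟨k', ℓ', I', hμ⟩ := hμ
  obtain ⟨g, hg, hgq⟩ := hconn q (theTop n)
  replace hg := S.closure_range_r_le_autGroup hg
  have hJ := hμ.map_aut hg
  rw [hgq] at hJ
  have hk' : 0 < k' := hJ.pos_of_one_lt (h₀.one_lt_of_pos hk)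
  have htop : IsTop (⟨k - 1, by omega⟩ : Fin k) :=
    fun s => Fin.le_def.2 (Nat.le_sub_one_of_lt s.isLt)
  have htop' : IsTop (⟨k' - 1, by omega⟩ : Fin k') :=
    fun s => Fin.le_def.2 (Nat.le_sub_one_of_lt s.isLt)
  obtain ⟨ψ, hψ, hψq, hψJ⟩ := h₀.exists_aut_map_top_cycle htop hstrict hJ htop'
  have hν := hJ.map_aut hψ
  rw [hψq] at hν
  refine ⟨μ * g⁻¹ * ψ⁻¹, ⟨k', ℓ', _, hν⟩, fun i j => ?_,
    fun a ha => h₀.apply_eq_self_of_top_cycle htop hν htop' hψJ ha⟩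
  rw [reorderedOp_mul_inv _ hψ, reorderedOp_mul_inv _ hg]
end

section
/- Let Q be a finite connected quandle of order n with its elements {1,2,…,n} naturally ordered and with profile {1, n-1} or with profile {1, 1, n-2}. Then the set of all automorphisms of Q coincides with the set of all natural reorderings of Q: a bijection ν of {1,2,…,n} is an automorphism of Q if and only if ν is a natural reordering with respect to r_{ν^{-1}(n)}. -/
/-!
An automorphism `ν` conjugates `r (ν⁻¹ n)` to `r n`, so it pulls the presentation of `r n` in
form (N) back to a presentation of `r (ν⁻¹ n)` that `ν` orders naturally.

Conversely, in a connected quandle all `r q` are conjugate, so the powers of `r q` and of `r n`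
have equally many fixed points. For the two profiles this forces a natural reordering `ν` with
respect to `r q`, `q = ν⁻¹ n`, to use the cycle lengths of `r n`, whence `ν r_q ν⁻¹ = r_n`. If `g`
is an inner automorphism with `g n = q`, then `ν g` fixes `n` and commutes with `r n`; as `r n`
has a single cycle besides its fixed points, and these are not permuted by `ν g`, the map `ν g`
is a power of `r n`, so `ν = (r n)^u g⁻¹` is inner. For `n = 3` the profile `{1, 1, 1}` makes
`r n` trivial, which connectedness excludes.
-/

namespace QuandleOp

variable {Q : Type*} (S : QuandleOp Q)

lemma r_apply (b a : Q) : S.r b a = S.op a b := rfl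

lemma r_pow_apply_self (b : Q) (d : ℕ) : (S.r b ^ d) b = b := by
  induction d with
  | zero => rfl
  | succ d ih => rw [pow_succ, Equiv.Perm.mul_apply, r_apply, S.op_self, ih]

def aut : Subgroup (Equiv.Perm Q) where
  carrier := {σ | ∀ a b, σ (S.op a b) = S.op (σ a) (σ b)}
  one_mem' _ _ := rfl
  mul_mem' {f g} hf hg a b := by
    simp only [Equiv.Perm.coe_mul, Function.comp_apply, hg a b, hf (g a) (g b)]
  inv_mem' {f} hf a b := f.injective <| by
    rw [(hf : ∀ a b, f (S.op a b) = S.op (f a) (f b))]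
    simp

lemma mem_aut {σ : Equiv.Perm Q} : σ ∈ S.aut ↔ ∀ a b, σ (S.op a b) = S.op (σ a) (σ b) :=
  Iff.rfl

lemma closure_range_r_le_aut : Subgroup.closure (Set.range S.r) ≤ S.aut :=
  (Subgroup.closure_le _).mpr <| Set.range_subset_iff.mpr fun b a c => S.op_distrib a c b

lemma r_eq_conj_of_mem_aut {σ : Equiv.Perm Q} (hσ : σ ∈ S.aut) (b : Q) :
    S.r (σ b) = σ * S.r b * σ⁻¹ := by
  ext x
  simp [r_apply, S.mem_aut.mp hσ]

variable {S}

lemma Connected.isConj_r (hS : S.Connected) (a b : Q) : IsConj (S.r a) (S.r b) := by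
  obtain ⟨g, hg, rfl⟩ := hS a b
  exact isConj_iff.mpr ⟨g, (S.r_eq_conj_of_mem_aut (S.closure_range_r_le_aut hg) a).symm⟩

lemma Connected.r_ne_one [Nontrivial Q] (hS : S.Connected) (b : Q) : S.r b ≠ 1 := by
  intro hb
  have hclosure : Subgroup.closure (Set.range S.r) = ⊥ := by
    rw [Subgroup.closure_eq_bot_iff]
    rintro _ ⟨a, rfl⟩
    exact isConj_one_right.mp (hb ▸ hS.isConj_r b a)
  obtain ⟨x, y, hxy⟩ := exists_pair_ne Q
  obtain ⟨g, hg, hgx⟩ := hS x y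
  rw [hclosure, Subgroup.mem_bot] at hg
  exact hxy (by simpa [hg] using hgx)

end QuandleOp

lemma Equiv.Perm.card_le_card_of_isConj {α : Type*} [Fintype α] [DecidableEq α]
    {p p' : Equiv.Perm α} (hconj : IsConj p p') {T T' : Finset α} (hT : ∀ x ∈ T, p x = x)
    (hT' : ∀ x, p' x = x → x ∈ T') : T.card ≤ T'.card := by
  obtain ⟨c, rfl⟩ := isConj_iff.mp hconj
  calc T.card ≤ p.supportᶜ.card :=
        Finset.card_le_card fun x hx => Finset.mem_compl.mpr (notMem_support.mpr (hT x hx))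
    _ = (c * p * c⁻¹).supportᶜ.card := by
        rw [Finset.card_compl, Finset.card_compl, card_support_conj]
    _ ≤ T'.card :=
        Finset.card_le_card fun x hx => hT' x (notMem_support.mp (Finset.mem_compl.mp hx))

lemma Nat.add_mod_eq_self_iff_dvd {t d m : ℕ} (ht : t < m) : (t + d) % m = t ↔ m ∣ d := by
  rw [Nat.dvd_iff_mod_eq_zero, Nat.add_mod, Nat.mod_eq_of_lt ht]
  have hd := Nat.mod_lt d (Nat.zero_lt_of_lt ht)
  constructor
  · intro h
    rcases Nat.lt_or_ge (t + d % m) m with hlt | hge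
    · rw [Nat.mod_eq_of_lt hlt] at h
      omega
    · rw [Nat.mod_eq_sub_mod hge, Nat.mod_eq_of_lt (by omega)] at h
      omega
  · intro h
    rw [h, Nat.add_zero, Nat.mod_eq_of_lt ht]

namespace IsNaturalReorderingWith

variable {n : ℕ} {S : QuandleOp (Fin n)} {q : Fin n} {ν : Equiv.Perm (Fin n)} {k : ℕ}
  {ℓ : Fin k → ℕ} {I : (s : Fin k) → Fin (ℓ s) → Fin n}

lemma apply_eq_theTop [NeZero n] (h : IsNaturalReorderingWith S q ν ℓ I) : ν q = theTop n :=
  Fin.ext h.1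

lemma one_le (h : IsNaturalReorderingWith S q ν ℓ I) (s : Fin k) : 1 ≤ ℓ s := h.2.1 s

lemma monotone (h : IsNaturalReorderingWith S q ν ℓ I) : Monotone ℓ := h.2.2.1

lemma sum_eq (h : IsNaturalReorderingWith S q ν ℓ I) : ∑ s, ℓ s = n - 1 := h.2.2.2.1

lemma apply_ne (h : IsNaturalReorderingWith S q ν ℓ I) (s : Fin k) (t : Fin (ℓ s)) :
    I s t ≠ q :=
  h.2.2.2.2.2.1 s t

lemma op_eq (h : IsNaturalReorderingWith S q ν ℓ I) (s : Fin k) (t : Fin (ℓ s)) :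
    S.op (I s t) q = I s ⟨(t + 1) % ℓ s, Nat.mod_lt _ (Nat.zero_lt_of_lt t.isLt)⟩ :=
  h.2.2.2.2.2.2.1 s t

lemma val_apply (h : IsNaturalReorderingWith S q ν ℓ I) (s : Fin k) (t : Fin (ℓ s)) :
    (ν (I s t)).val = (∑ j ∈ Finset.Iio s, ℓ j) + t.val :=
  h.2.2.2.2.2.2.2 s t

lemma r_pow_apply (h : IsNaturalReorderingWith S q ν ℓ I) (s : Fin k) (t : Fin (ℓ s))
    (d : ℕ) :
    (S.r q ^ d) (I s t) = I s ⟨(t + d) % ℓ s, Nat.mod_lt _ (Nat.zero_lt_of_lt t.isLt)⟩ := by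
  induction d generalizing t with
  | zero => simp [Nat.mod_eq_of_lt t.isLt]
  | succ d ih =>
    rw [pow_succ, Equiv.Perm.mul_apply, QuandleOp.r_apply, h.op_eq s t, ih]
    refine congrArg (I s) (Fin.ext ?_)
    show ((t + 1) % ℓ s + d) % ℓ s = (t + (d + 1)) % ℓ s
    rw [Nat.mod_add_mod, Nat.add_right_comm, Nat.add_assoc]

lemma exists_eq_of_ne (h : IsNaturalReorderingWith S q ν ℓ I) {y : Fin n} (hy : y ≠ q) :
    ∃ s t, I s t = y := by
  obtain ⟨-, -, -, hsum, hinj, hne, -, -⟩ := h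
  let f : (Σ s, Fin (ℓ s)) → {x : Fin n // x ≠ q} := fun p => ⟨I p.1 p.2, hne _ _⟩
  have hf : Function.Bijective f := (Fintype.bijective_iff_injective_and_card f).mpr
    ⟨fun _ _ hpq => hinj (congrArg Subtype.val hpq), by simp [hsum]⟩
  obtain ⟨⟨s, t⟩, hst⟩ := hf.2 ⟨y, hy⟩
  exact ⟨s, t, congrArg Subtype.val hst⟩

lemma sigma_eq_of_eq (h : IsNaturalReorderingWith S q ν ℓ I) {s s' : Fin k} {t : Fin (ℓ s)}
    {t' : Fin (ℓ s')} (heq : I s t = I s' t') : (⟨s, t⟩ : Σ s, Fin (ℓ s)) = ⟨s', t'⟩ :=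
  h.2.2.2.2.1 heq

lemma r_pow_apply_eq_self_iff (h : IsNaturalReorderingWith S q ν ℓ I) (d : ℕ) (x : Fin n) :
    (S.r q ^ d) x = x ↔ x = q ∨ ∃ s t, I s t = x ∧ ℓ s ∣ d := by
  rcases eq_or_ne x q with rfl | hx
  · simp [QuandleOp.r_pow_apply_self]
  obtain ⟨s, t, rfl⟩ := h.exists_eq_of_ne hx
  rw [h.r_pow_apply]
  constructor
  · intro hfix
    refine Or.inr ⟨s, t, rfl, (Nat.add_mod_eq_self_iff_dvd t.isLt).mp ?_⟩
    exact congrArg Fin.val (eq_of_heq (Sigma.mk.inj_iff.mp (h.sigma_eq_of_eq hfix)).2)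
  · rintro (hq | ⟨s', t', heq, hdvd⟩)
    · exact absurd hq hx
    obtain ⟨rfl, ht⟩ := Sigma.mk.inj_iff.mp (h.sigma_eq_of_eq heq)
    obtain rfl := eq_of_heq ht
    exact congrArg (I _) (Fin.ext ((Nat.add_mod_eq_self_iff_dvd (Fin.isLt _)).mpr hdvd))

lemma num_cycles_pos (h : IsNaturalReorderingWith S q ν ℓ I) (hn : 2 ≤ n) : 0 < k := by
  refine Nat.pos_of_ne_zero fun hk => ?_
  subst hk
  have := h.sum_eq
  simp at this
  omega

lemma le_sub_one (h : IsNaturalReorderingWith S q ν ℓ I) (s : Fin k) : ℓ s ≤ n - 1 :=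
  h.sum_eq ▸ Finset.single_le_sum (fun _ _ => Nat.zero_le _) (Finset.mem_univ s)

lemma sum_lt_sub_one (h : IsNaturalReorderingWith S q ν ℓ I) {T : Finset (Fin k)} {c : Fin k}
    (hc : c ∉ T) : ∑ s ∈ T, ℓ s < n - 1 :=
  h.sum_eq ▸ Finset.sum_lt_sum_of_subset (Finset.subset_univ T) (Finset.mem_univ c) hc
    (h.one_le c) fun _ _ _ => Nat.zero_le _

lemma r_eq_one (h : IsNaturalReorderingWith S q ν ℓ I) (hℓ : ∀ s, ℓ s = 1) :
    S.r q = 1 := by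
  refine Equiv.ext fun x => ?_
  simpa using (h.r_pow_apply_eq_self_iff 1 x).mpr <| by
    rcases eq_or_ne x q with hx | hx
    · exact Or.inl hx
    · obtain ⟨s, t, hst⟩ := h.exists_eq_of_ne hx
      exact Or.inr ⟨s, t, hst, (hℓ s).symm ▸ dvd_rfl⟩

lemma comp_mem_aut {μ : Equiv.Perm (Fin n)} (h : IsNaturalReorderingWith S q μ ℓ I)
    (hν : ν ∈ S.aut) :
    IsNaturalReorderingWith S (ν.symm q) (μ * ν) ℓ fun s t => ν.symm (I s t) := by
  obtain ⟨hq, hpos, hmono, hsum, hinj, hne, hcyc, hval⟩ := h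
  refine ⟨by simpa using hq, hpos, hmono, hsum, fun _ _ hpq => hinj (ν.symm.injective hpq),
    fun s t hst => hne s t (ν.symm.injective hst), fun s t => ν.injective ?_,
    fun s t => by simpa using hval s t⟩
  rw [S.mem_aut.mp hν]
  simpa using hcyc s t

lemma apply_op_eq [NeZero n] {I₀ : (s : Fin k) → Fin (ℓ s) → Fin n}
    (h₀ : IsNaturalReorderingWith S (theTop n) (Equiv.refl _) ℓ I₀)
    (h : IsNaturalReorderingWith S q ν ℓ I) (x : Fin n) :
    ν (S.op x q) = S.op (ν x) (theTop n) := by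
  have hI : ∀ s t, ν (I s t) = I₀ s t := fun s t =>
    Fin.ext ((h.val_apply s t).trans (h₀.val_apply s t).symm)
  rcases eq_or_ne x q with rfl | hx
  · rw [S.op_self, h.apply_eq_theTop, S.op_self]
  · obtain ⟨s, t, rfl⟩ := h.exists_eq_of_ne hx
    rw [h.op_eq, hI, hI, h₀.op_eq]

lemma apply_eq_r_pow_apply_of_commute (h : IsNaturalReorderingWith S q ν ℓ I)
    {σ : Equiv.Perm (Fin n)} (hσ : Commute σ (S.r q)) {s : Fin k} {u : Fin (ℓ s)}
    (hu : σ (I s ⟨0, Nat.zero_lt_of_lt u.isLt⟩) = I s u) (t : Fin (ℓ s)) :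
    σ (I s t) = (S.r q ^ (u : ℕ)) (I s t) := by
  have ht : I s t = (S.r q ^ (t : ℕ)) (I s ⟨0, Nat.zero_lt_of_lt u.isLt⟩) := by
    rw [h.r_pow_apply]
    exact congrArg (I s) (Fin.ext (by simp [Nat.mod_eq_of_lt t.isLt]))
  calc σ (I s t) = (S.r q ^ (t : ℕ)) (σ (I s ⟨0, _⟩)) := by
        rw [ht, ← Equiv.Perm.mul_apply, (hσ.pow_right _).eq, Equiv.Perm.mul_apply]
    _ = (S.r q ^ (u : ℕ)) (I s t) := by
        rw [hu, h.r_pow_apply, h.r_pow_apply]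
        exact congrArg (I s) (Fin.ext (by simp [Nat.add_comm]))

lemma exists_single_cycle_of_isConj [NeZero n]
    (h₀ : NaturallyOrderedWith S fun _ : Fin 1 => n - 1)
    (hconj : IsConj (S.r q) (S.r (theTop n))) (h : IsNaturalReorderingWith S q ν ℓ I) :
    ∃ I', IsNaturalReorderingWith S q ν (fun _ : Fin 1 => n - 1) I' := by
  obtain ⟨I₀, h₀⟩ := h₀
  have hk0 := h.num_cycles_pos (by have : 1 ≤ n - 1 := h₀.one_le 0; omega)
  have hs₀ : ℓ ⟨0, hk0⟩ = n - 1 := by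
    refine (h.le_sub_one _).antisymm (not_lt.mp fun hlt => ?_)
    have hcard := Equiv.Perm.card_le_card_of_isConj (hconj.pow (ℓ ⟨0, hk0⟩))
      (T := {q, I ⟨0, hk0⟩ ⟨0, h.one_le _⟩}) (T' := {theTop n}) ?_ ?_
    · rw [Finset.card_pair (h.apply_ne _ _).symm, Finset.card_singleton] at hcard
      omega
    · simp only [Finset.mem_insert, Finset.mem_singleton]
      rintro x (rfl | rfl)
      exacts [(h.r_pow_apply_eq_self_iff _ _).mpr (Or.inl rfl),
        (h.r_pow_apply_eq_self_iff _ _).mpr (Or.inr ⟨_, _, rfl, dvd_rfl⟩)]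
    · intro x hx
      rcases (h₀.r_pow_apply_eq_self_iff _ x).mp hx with rfl | ⟨_, _, -, hdvd⟩
      · exact Finset.mem_singleton_self _
      · exact absurd (Nat.le_of_dvd (h.one_le _) hdvd) (not_le.mpr hlt)
  have hk : k = 1 := by
    by_contra hk
    have := h.sum_lt_sub_one (T := {⟨0, hk0⟩}) (c := ⟨1, by omega⟩) (by simp [Fin.ext_iff])
    rw [Finset.sum_singleton] at this
    omega
  subst hk
  obtain rfl : ℓ = fun _ => n - 1 :=
    funext fun s => by rw [Subsingleton.elim s ⟨0, hk0⟩, hs₀]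
  exact ⟨I, h⟩

lemma length_zero_eq_one_of_isConj [NeZero n] (h₀ : NaturallyOrderedWith S ![1, n - 2])
    (hconj : IsConj (S.r q) (S.r (theTop n)))
    (h : IsNaturalReorderingWith S q ν ℓ I) (hk0 : 0 < k) : ℓ ⟨0, hk0⟩ = 1 := by
  obtain ⟨I₀, h₀⟩ := h₀
  by_contra hne
  have hge : ∀ s, 2 ≤ ℓ s := fun s =>
    (by have := h.one_le ⟨0, hk0⟩; omega : 2 ≤ ℓ ⟨0, hk0⟩).trans
      (h.monotone (show (⟨0, hk0⟩ : Fin k) ≤ s from Nat.zero_le _))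
  have hcard := Equiv.Perm.card_le_card_of_isConj (hconj.pow 1).symm
    (T := {theTop n, I₀ 0 ⟨0, by simp⟩}) (T' := {q}) ?_ ?_
  · rw [Finset.card_pair (h₀.apply_ne _ _).symm, Finset.card_singleton] at hcard
    omega
  · simp only [Finset.mem_insert, Finset.mem_singleton]
    rintro x (rfl | rfl)
    exacts [(h₀.r_pow_apply_eq_self_iff _ _).mpr (Or.inl rfl),
      (h₀.r_pow_apply_eq_self_iff _ _).mpr (Or.inr ⟨0, _, rfl, by simp⟩)]
  · intro x hx
    rcases (h.r_pow_apply_eq_self_iff 1 x).mp hx with rfl | ⟨s, _, -, hdvd⟩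
    · exact Finset.mem_singleton_self _
    · exact absurd (Nat.le_of_dvd one_pos hdvd) (by have := hge s; omega)

lemma length_one_eq_sub_two_of_isConj [NeZero n] (h₀ : NaturallyOrderedWith S ![1, n - 2])
    (hconj : IsConj (S.r q) (S.r (theTop n))) (h : IsNaturalReorderingWith S q ν ℓ I)
    {hk0 : 0 < k} (hs₀ : ℓ ⟨0, hk0⟩ = 1) (hk1 : 1 < k) : ℓ ⟨1, hk1⟩ = n - 2 := by
  obtain ⟨I₀, h₀⟩ := h₀
  have hpair : ℓ ⟨0, hk0⟩ + ℓ ⟨1, hk1⟩ ≤ n - 1 := by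
    rw [← h.sum_eq, ← Finset.sum_pair (by simp [Fin.ext_iff])]
    exact Finset.sum_le_sum_of_subset (Finset.subset_univ _)
  refine le_antisymm (by omega) (not_lt.mp fun hlt => ?_)
  have hI : I ⟨0, hk0⟩ ⟨0, h.one_le _⟩ ≠ I ⟨1, hk1⟩ ⟨0, h.one_le _⟩ := fun heq =>
    absurd (congrArg Sigma.fst (h.sigma_eq_of_eq heq)) (by simp [Fin.ext_iff])
  have hcard := Equiv.Perm.card_le_card_of_isConj (hconj.pow (ℓ ⟨1, hk1⟩))
    (T := {q, I ⟨0, hk0⟩ ⟨0, h.one_le _⟩, I ⟨1, hk1⟩ ⟨0, h.one_le _⟩})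
    (T' := {theTop n, I₀ 0 ⟨0, by simp⟩}) ?_ ?_
  · rw [Finset.card_eq_three.mpr
      ⟨_, _, _, (h.apply_ne _ _).symm, (h.apply_ne _ _).symm, hI, rfl⟩] at hcard
    exact absurd (hcard.trans Finset.card_le_two) (by norm_num)
  · simp only [Finset.mem_insert, Finset.mem_singleton]
    rintro x (rfl | rfl | rfl)
    exacts [(h.r_pow_apply_eq_self_iff _ _).mpr (Or.inl rfl),
      (h.r_pow_apply_eq_self_iff _ _).mpr (Or.inr ⟨_, _, rfl, by rw [hs₀]; exact one_dvd _⟩),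
      (h.r_pow_apply_eq_self_iff _ _).mpr (Or.inr ⟨_, _, rfl, dvd_rfl⟩)]
  · intro x hx
    rcases (h₀.r_pow_apply_eq_self_iff _ x).mp hx with rfl | ⟨s, t, rfl, hdvd⟩
    · simp
    fin_cases s
    · simp only [Finset.mem_insert, Finset.mem_singleton]
      exact Or.inr (congrArg (I₀ 0) (Fin.ext (by simpa using t.isLt)))
    · have := Nat.le_of_dvd (h.one_le _) hdvd
      simp at this
      omega

lemma exists_fixed_point_and_cycle_of_isConj [NeZero n] (h₀ : NaturallyOrderedWith S ![1, n - 2])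
    (hn : 2 ≤ n - 2) (hconj : IsConj (S.r q) (S.r (theTop n)))
    (h : IsNaturalReorderingWith S q ν ℓ I) :
    ∃ I', IsNaturalReorderingWith S q ν ![1, n - 2] I' := by
  have hk0 := h.num_cycles_pos (by omega)
  have hs₀ := length_zero_eq_one_of_isConj h₀ hconj h hk0
  have hk1 : 1 < k := by
    by_contra hk
    obtain rfl : k = 1 := by omega
    have hsum := h.sum_eq
    rw [Fin.sum_univ_one] at hsum
    have : ℓ ⟨0, hk0⟩ = ℓ 0 := rfl
    omega
  have hs₁ := length_one_eq_sub_two_of_isConj h₀ hconj h hs₀ hk1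
  have hk : k = 2 := by
    by_contra hk
    have := h.sum_lt_sub_one (T := {⟨0, hk0⟩, ⟨1, hk1⟩}) (c := ⟨2, by omega⟩)
      (by simp [Fin.ext_iff])
    rw [Finset.sum_pair (by simp [Fin.ext_iff])] at this
    omega
  subst hk
  obtain rfl : ℓ = ![1, n - 2] := funext fun s => by
    fin_cases s
    exacts [hs₀, hs₁]
  exact ⟨I, h⟩

end IsNaturalReorderingWith

namespace NaturallyOrderedWith

variable {n : ℕ} [NeZero n] {S : QuandleOp (Fin n)} {σ : Equiv.Perm (Fin n)}

lemma exists_eq_r_pow_of_commute_of_single_cycle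
    (h₀ : NaturallyOrderedWith S fun _ : Fin 1 => n - 1) (hσ : Commute σ (S.r (theTop n)))
    (htop : σ (theTop n) = theTop n) : ∃ u : ℕ, σ = S.r (theTop n) ^ u := by
  obtain ⟨I₀, h₀⟩ := h₀
  have hne : σ (I₀ 0 ⟨0, h₀.one_le 0⟩) ≠ theTop n := fun heq =>
    h₀.apply_ne 0 _ (σ.injective (heq.trans htop.symm))
  obtain ⟨s, u, hu⟩ := h₀.exists_eq_of_ne hne
  obtain rfl := Subsingleton.elim s 0
  refine ⟨u, Equiv.ext fun x => ?_⟩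
  rcases eq_or_ne x (theTop n) with rfl | hx
  · rw [htop, QuandleOp.r_pow_apply_self]
  obtain ⟨s, t, rfl⟩ := h₀.exists_eq_of_ne hx
  obtain rfl := Subsingleton.elim s 0
  exact h₀.apply_eq_r_pow_apply_of_commute hσ hu.symm t

lemma exists_eq_r_pow_of_commute_of_fixed_point_and_cycle
    (h₀ : NaturallyOrderedWith S ![1, n - 2]) (hn : 2 ≤ n - 2)
    (hσ : Commute σ (S.r (theTop n))) (htop : σ (theTop n) = theTop n) :
    ∃ u : ℕ, σ = S.r (theTop n) ^ u := by
  obtain ⟨I₀, h₀⟩ := h₀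
  set e := I₀ 0 ⟨0, by simp⟩
  have hfixed : ∀ x, (S.r (theTop n) ^ 1) x = x ↔ x = theTop n ∨ x = e := by
    intro x
    rw [h₀.r_pow_apply_eq_self_iff]
    refine or_congr_right ⟨?_, ?_⟩
    · rintro ⟨s, t, rfl, hdvd⟩
      fin_cases s
      · exact congrArg (I₀ 0) (Fin.ext (by simpa using t.isLt))
      · have := Nat.le_of_dvd one_pos hdvd
        simp at this
        omega
    · rintro rfl
      exact ⟨0, _, rfl, by simp⟩
  have he : σ e = e := by
    have hσe : (S.r (theTop n) ^ 1) (σ e) = σ e := by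
      rw [← Equiv.Perm.mul_apply, ← (hσ.pow_right 1).eq, Equiv.Perm.mul_apply,
        (hfixed e).mpr (Or.inr rfl)]
    rcases (hfixed _).mp hσe with h | h
    · exact absurd (σ.injective (h.trans htop.symm)) (h₀.apply_ne 0 _)
    · exact h
  have hne : σ (I₀ 1 ⟨0, by simp; omega⟩) ≠ theTop n := fun heq =>
    h₀.apply_ne 1 _ (σ.injective (heq.trans htop.symm))
  obtain ⟨s, u, hu⟩ := h₀.exists_eq_of_ne hne
  fin_cases s
  · exfalso
    have hu0 : I₀ _ u = e := congrArg (I₀ _) (Fin.ext (by simpa using u.isLt))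
    have := h₀.sigma_eq_of_eq (σ.injective ((hu.symm.trans hu0).trans he.symm))
    exact absurd (congrArg Sigma.fst this) (by simp)
  refine ⟨u, Equiv.ext fun x => ?_⟩
  rcases eq_or_ne x (theTop n) with rfl | hx
  · rw [htop, QuandleOp.r_pow_apply_self]
  obtain ⟨s, t, rfl⟩ := h₀.exists_eq_of_ne hx
  fin_cases s
  · have ht : I₀ _ t = e := congrArg (I₀ _) (Fin.ext (by simpa using t.isLt))
    rw [ht, he]
    exact ((h₀.r_pow_apply_eq_self_iff _ e).mpr (Or.inr ⟨0, _, rfl, by simp⟩)).symm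
  · exact h₀.apply_eq_r_pow_apply_of_commute hσ hu.symm t

lemma mem_closure_range_r {k : ℕ} {ℓ : Fin k → ℕ}
    {I : (s : Fin k) → Fin (ℓ s) → Fin n} {ν : Equiv.Perm (Fin n)} (hconn : S.Connected)
    (h₀ : NaturallyOrderedWith S ℓ)
    (h : IsNaturalReorderingWith S (ν.symm (theTop n)) ν ℓ I)
    (hcent : ∀ σ : Equiv.Perm (Fin n), Commute σ (S.r (theTop n)) →
      σ (theTop n) = theTop n → ∃ u : ℕ, σ = S.r (theTop n) ^ u) :
    ν ∈ Subgroup.closure (Set.range S.r) := by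
  obtain ⟨I₀, h₀⟩ := h₀
  obtain ⟨g, hg, hgq⟩ := hconn (theTop n) (ν.symm (theTop n))
  have hgr : S.r (ν.symm (theTop n)) = g * S.r (theTop n) * g⁻¹ := by
    rw [← hgq]
    exact S.r_eq_conj_of_mem_aut (S.closure_range_r_le_aut hg) _
  have hνr : ν * S.r (ν.symm (theTop n)) = S.r (theTop n) * ν :=
    Equiv.ext (h₀.apply_op_eq h)
  have hcomm : Commute (ν * g) (S.r (theTop n)) :=
    calc ν * g * S.r (theTop n) = ν * (g * S.r (theTop n) * g⁻¹) * g := by group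
      _ = S.r (theTop n) * (ν * g) := by rw [← hgr, hνr, mul_assoc]
  obtain ⟨u, hu⟩ := hcent (ν * g) hcomm (by simp [hgq])
  have hν : ν = S.r (theTop n) ^ u * g⁻¹ := by rw [← hu, mul_inv_cancel_right]
  rw [hν]
  exact mul_mem (pow_mem (Subgroup.subset_closure (Set.mem_range_self _)) u) (inv_mem hg)

end NaturallyOrderedWith

/-- Corollary of the paper: let the elements of a finite connected
quandle on `{1,…,n}` be naturally ordered, with profile `{1, n-1}` or `{1, 1, n-2}`.
Then the automorphisms of the quandle are exactly the natural reorderings: a bijection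
`ν` is an automorphism if and only if it is a natural reordering with respect to
`r (ν⁻¹ n)`. -/
theorem automorphisms_eq_natural_reorderings
    {n : ℕ} [NeZero n] (S : QuandleOp (Fin n)) (hconn : S.Connected)
    (hord : NaturallyOrderedWith S (fun _ : Fin 1 => n - 1) ∨
            NaturallyOrderedWith S ![1, n - 2]) :
    ∀ ν : Equiv.Perm (Fin n),
      (∀ a b, ν (S.op a b) = S.op (ν a) (ν b)) ↔
        IsNaturalReordering S (ν.symm (theTop n)) ν := by
  intro ν
  constructor
  · intro hν
    rcases hord with ⟨I₀, h₀⟩ | ⟨I₀, h₀⟩ <;>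
    · have h := h₀.comp_mem_aut (ν := ν) hν
      rw [← Equiv.Perm.one_def, one_mul] at h
      exact ⟨_, _, _, h⟩
  · rintro ⟨k, ℓ, I, h⟩
    have hconj := hconn.isConj_r (ν.symm (theTop n)) (theTop n)
    refine S.mem_aut.mp (S.closure_range_r_le_aut ?_)
    rcases hord with h₀ | h₀
    · obtain ⟨I', h'⟩ := h.exists_single_cycle_of_isConj h₀ hconj
      exact h₀.mem_closure_range_r hconn h' fun _ =>
        h₀.exists_eq_r_pow_of_commute_of_single_cycle
    rcases Nat.lt_or_ge 1 (n - 2) with hn | hn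
    · obtain ⟨I', h'⟩ := h.exists_fixed_point_and_cycle_of_isConj h₀ hn hconj
      exact h₀.mem_closure_range_r hconn h' fun _ =>
        h₀.exists_eq_r_pow_of_commute_of_fixed_point_and_cycle hn
    obtain ⟨I₀, h₀⟩ := h₀
    have hn₁ : 1 ≤ n - 2 := by simpa using h₀.one_le 1
    have : Nontrivial (Fin n) := Fin.nontrivial_iff_two_le.mpr (by omega)
    exact absurd (h₀.r_eq_one (Fin.forall_fin_two.mpr ⟨rfl, by simp; omega⟩))
      (hconn.r_ne_one _)
end
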